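/- arXiv:2310.02261 — 3 statements merged into one kernel-verified Lean document; each statement's English description precedes it below -/
import Mathlib

section
/- Let $\delta \in (0,1]$ and let $f:[0,\infty)\to[0,\infty)$ be non-increasing, and let $a_0 \ge 0$ and $a_1,\dots,a_T \ge 0$. Fix $i \in \{0,\dots,T\}$. Then $\sum_{t=i+1}^{T} \left(\sum_{s=t-i}^{t} a_s\right) f\left(\sum_{r=0}^{t} a_r\right) \le (i+1)\int_{\sum_{r=0}^{0} a_r}^{\sum_{r=0}^{T} a_r} f(x)\,dx$. -/
/-!
Write `S t = a₀ + ⋯ + a_t`. Splitting the window sum by lag `τ = t - s ∈ {0, …, i}` and using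
`f (S t) ≤ f (S (t - τ))`, each lag contributes at most `∑_{u=1}^T a_u f (S u)`. Since `f` is
non-increasing, `a_u f (S u)` is at most the integral of `f` over `[S (u - 1), S u]`, so that sum
is bounded by `∫_{S 0}^{S T} f`, and the `i + 1` lags give the factor `i + 1`.
-/

open Finset Set

theorem AntitoneOn.sub_mul_le_integral {f : ℝ → ℝ} {c d : ℝ} (hf : AntitoneOn f (Icc c d))
    (hcd : c ≤ d) : (d - c) * f d ≤ ∫ x in c..d, f x := by
  rw [← smul_eq_mul, ← intervalIntegral.integral_const]
  exact intervalIntegral.integral_mono_on hcd intervalIntegrable_const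
    (hf.mono (uIcc_subset_Icc (left_mem_Icc.2 hcd) (right_mem_Icc.2 hcd))).intervalIntegrable
    fun x hx => hf hx (right_mem_Icc.2 hcd) hx.2

theorem AntitoneOn.sum_sub_mul_le_integral {S : ℕ → ℝ} (hS : Monotone S) {f : ℝ → ℝ} (n : ℕ)
    (hf : AntitoneOn f (Icc (S 0) (S n))) :
    ∑ k ∈ Icc 1 n, (S k - S (k - 1)) * f (S k) ≤ ∫ x in S 0..S n, f x := by
  induction n with
  | zero => simp
  | succ n ih =>
    have hmem : ∀ k ≤ n + 1, S k ∈ Icc (S 0) (S (n + 1)) := fun k hk => ⟨hS k.zero_le, hS hk⟩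
    have hint : ∀ k l, k ≤ n + 1 → l ≤ n + 1 →
        IntervalIntegrable f MeasureTheory.volume (S k) (S l) := fun k l hk hl =>
      (hf.mono (uIcc_subset_Icc (hmem k hk) (hmem l hl))).intervalIntegrable
    rw [sum_Icc_succ_top (by omega), ← intervalIntegral.integral_add_adjacent_intervals
      (hint 0 n (by omega) (by omega)) (hint n (n + 1) (by omega) le_rfl)]
    exact add_le_add (ih (hf.mono (Icc_subset_Icc_right (hS n.le_succ))))
      ((hf.mono (Icc_subset_Icc (hmem n n.le_succ).1 le_rfl)).sub_mul_le_integral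
        (hS n.le_succ))

theorem Finset.sum_Icc_sub_eq_sum_range {M : Type*} [AddCommMonoid M] (g : ℕ → M) {i t : ℕ}
    (hit : i ≤ t) : ∑ s ∈ Icc (t - i) t, g s = ∑ τ ∈ range (i + 1), g (t - τ) :=
  sum_nbij' (t - ·) (t - ·) (by simp; omega) (by simp; omega) (by simp; omega) (by simp; omega)
    (by simp only [mem_Icc]; intro s hs; rw [Nat.sub_sub_self hs.2])

theorem Finset.sum_Icc_comp_sub_le {M : Type*} [AddCommMonoid M] [PartialOrder M]
    [IsOrderedAddMonoid M] {g : ℕ → M} (hg : ∀ u, 0 ≤ g u) {τ i : ℕ} (hτ : τ ≤ i) (T : ℕ) :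
    ∑ t ∈ Icc (i + 1) T, g (t - τ) ≤ ∑ u ∈ Icc 1 T, g u := by
  rw [← sum_image (g := (· - τ)) fun t ht t' ht' heq => by
    simp only [coe_Icc, Set.mem_Icc] at ht ht' heq; omega]
  exact sum_le_sum_of_subset_of_nonneg (by intro u; simp only [mem_image, mem_Icc]; omega)
    fun u _ _ => hg u

theorem stmt_1_general (T : ℕ) (f : ℝ → ℝ)
    (hf_nonneg : ∀ x, 0 ≤ x → 0 ≤ f x) (hf_anti : AntitoneOn f (Set.Ici 0))
    (a : ℕ → ℝ) (ha : ∀ t, 0 ≤ a t) (i : ℕ) :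
    ∑ t ∈ Finset.Icc (i + 1) T,
        (∑ s ∈ Finset.Icc (t - i) t, a s) * f (∑ r ∈ Finset.range (t + 1), a r)
      ≤ ((i : ℝ) + 1) * ∫ x in (∑ r ∈ Finset.range 1, a r)..(∑ r ∈ Finset.range (T + 1), a r), f x := by
  set S : ℕ → ℝ := fun n => ∑ r ∈ range (n + 1), a r
  have hS_succ : ∀ n, S (n + 1) = S n + a (n + 1) := fun n => sum_range_succ a (n + 1)
  have hS : Monotone S := monotone_nat_of_le_succ fun n => by linarith [hS_succ n, ha (n + 1)]
  have hS_nonneg : ∀ n, 0 ≤ S n := fun n => sum_nonneg fun r _ => ha r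
  have ha_eq : ∀ u, 1 ≤ u → a u = S u - S (u - 1) := by
    intro u hu
    obtain ⟨k, rfl⟩ := Nat.exists_eq_add_of_le' hu
    simp only [hS_succ, Nat.add_sub_cancel, add_sub_cancel_left]
  calc ∑ t ∈ Icc (i + 1) T, (∑ s ∈ Icc (t - i) t, a s) * f (S t)
      = ∑ t ∈ Icc (i + 1) T, ∑ τ ∈ range (i + 1), a (t - τ) * f (S t) :=
        sum_congr rfl fun t ht => by
          rw [sum_Icc_sub_eq_sum_range _ (by simp only [Finset.mem_Icc] at ht; omega), sum_mul]
    _ ≤ ∑ t ∈ Icc (i + 1) T, ∑ τ ∈ range (i + 1), a (t - τ) * f (S (t - τ)) :=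
        sum_le_sum fun t _ => sum_le_sum fun τ _ => mul_le_mul_of_nonneg_left
          (hf_anti (hS_nonneg _) (hS_nonneg _) (hS (t.sub_le τ))) (ha _)
    _ = ∑ τ ∈ range (i + 1), ∑ t ∈ Icc (i + 1) T, a (t - τ) * f (S (t - τ)) := sum_comm
    _ ≤ ∑ τ ∈ range (i + 1), ∑ u ∈ Icc 1 T, a u * f (S u) :=
        sum_le_sum fun τ hτ => sum_Icc_comp_sub_le
          (fun u => mul_nonneg (ha u) (hf_nonneg _ (hS_nonneg u)))
          (Nat.lt_succ_iff.1 (mem_range.1 hτ)) T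
    _ = (i + 1) * ∑ u ∈ Icc 1 T, (S u - S (u - 1)) * f (S u) := by
        rw [sum_const, card_range, nsmul_eq_mul, Nat.cast_succ]
        congr 1
        exact sum_congr rfl fun u hu => by rw [← ha_eq u (Finset.mem_Icc.1 hu).1]
    _ ≤ (i + 1) * ∫ x in S 0..S T, f x := by
        gcongr
        exact AntitoneOn.sum_sub_mul_le_integral hS T
          (hf_anti.mono fun x hx => (hS_nonneg 0).trans hx.1)

/-- Inner step of Lemma 4: for fixed lag `i`, the weighted sum over `t` is bounded by
`(i+1)` times the integral of `f`. -/
theorem stmt_1 (T : ℕ) (δ : ℝ) (hδ : δ ∈ Set.Ioc (0:ℝ) 1) (f : ℝ → ℝ)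
    (hf_nonneg : ∀ x, 0 ≤ x → 0 ≤ f x) (hf_anti : AntitoneOn f (Set.Ici 0))
    (a : ℕ → ℝ) (ha : ∀ t, 0 ≤ a t) (i : ℕ) (hi : i ≤ T) :
    ∑ t ∈ Finset.Icc (i + 1) T,
        (∑ s ∈ Finset.Icc (t - i) t, a s) * f (∑ r ∈ Finset.range (t + 1), a r)
      ≤ ((i : ℝ) + 1) * ∫ x in (∑ r ∈ Finset.range 1, a r)..(∑ r ∈ Finset.range (T + 1), a r), f x :=
  stmt_1_general T f hf_nonneg hf_anti a ha i
end

section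
/- Let $K \in \mathbb{R}^{d_u \times d_x}$ with $\|K\| \le \kappa^{\mathbb{L}}$, suppose $\|(A+BK)^j\| \le \sqrt{d_x}(1-\delta)^j$ for all $j \ge 0$, and $\|w_s\| \le w$ for all $s$. Define the DAC matrices $M^{[j+1]} = K(A+BK)^j$ for $0 \le j \le p-1$. Then for every $t$, the linear-policy action $u_t^{\mathbb{L}} = \sum_{j=0}^{t-1} K(A+BK)^j w_{t-j}$ and the DAC action $u_t = \sum_{j=0}^{p-1} M^{[j+1]} w_{t-j}$ satisfy $\|u_t - u_t^{\mathbb{L}}\| \le \sqrt{d_x}\,\kappa^{\mathbb{L}}\, \frac{w}{\delta} e^{-\delta p}$. -/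
/-!
The DAC action is the truncation of the linear-policy action to its first `p` terms, and the
`j`-th term has norm at most `√dx κ w (1 - δ)^j`. If `t ≤ p` nothing is lost, since the extra
terms see disturbances `w s` with `s ≤ 0`; otherwise the error is the geometric tail from `p`,
at most `√dx κ w (1 - δ)^p / δ`, and `(1 - δ)^p ≤ e^{-δ p}`.
-/

open Finset

lemma Finset.sum_range_sub_sum_range_of_eq_zero {E : Type*} [AddCommGroup E] {f : ℕ → E}
    {t : ℕ} (hf : ∀ j, t ≤ j → f j = 0) (p : ℕ) :
    ∑ j ∈ range t, f j - ∑ j ∈ range p, f j = ∑ j ∈ Ico p t, f j := by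
  rcases le_total p t with hpt | htp
  · exact (sum_Ico_eq_sub f hpt).symm
  · have hsum : ∑ j ∈ range t, f j = ∑ j ∈ range p, f j :=
      sum_subset (range_subset_range.2 htp) fun j _ hj => hf j (by simpa using hj)
    rw [hsum, sub_self, Ico_eq_empty_of_le htp, sum_empty]

lemma norm_sum_Ico_le_of_norm_le_geometric {E : Type*} [SeminormedAddCommGroup E]
    {f : ℕ → E} {C r : ℝ} (hr₀ : 0 ≤ r) (hr₁ : r < 1) (hf : ∀ j, ‖f j‖ ≤ C * r ^ j)
    (p t : ℕ) : ‖∑ j ∈ Ico p t, f j‖ ≤ C * r ^ p / (1 - r) := by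
  have hC : 0 ≤ C := by simpa using (norm_nonneg _).trans (hf 0)
  calc ‖∑ j ∈ Ico p t, f j‖ ≤ ∑ j ∈ Ico p t, C * r ^ j :=
        (norm_sum_le _ _).trans (sum_le_sum fun j _ => hf j)
    _ = C * ∑ j ∈ Ico p t, r ^ j := (mul_sum _ _ _).symm
    _ ≤ C * (r ^ p / (1 - r)) := by gcongr; exact geom_sum_Ico_le_of_lt_one hr₀ hr₁
    _ = C * r ^ p / (1 - r) := mul_div_assoc _ _ _ |>.symm

lemma Real.one_sub_pow_le_exp_neg_mul {δ : ℝ} (hδ : δ ≤ 1) (n : ℕ) :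
    (1 - δ) ^ n ≤ Real.exp (-δ * n) :=
  calc (1 - δ) ^ n ≤ Real.exp (-δ) ^ n :=
        pow_le_pow_left₀ (sub_nonneg.2 hδ) (Real.one_sub_le_exp_neg δ) n
    _ = Real.exp (-δ * n) := by rw [← Real.exp_nat_mul, mul_comm]

/-- DAC approximation of a linear policy: truncation error bound. -/
theorem stmt_9 (dx du p : ℕ) (δ κ wb : ℝ) (hδ : δ ∈ Set.Ioo (0:ℝ) 1)
    (A : EuclideanSpace ℝ (Fin dx) →L[ℝ] EuclideanSpace ℝ (Fin dx))
    (B : EuclideanSpace ℝ (Fin du) →L[ℝ] EuclideanSpace ℝ (Fin dx))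
    (K : EuclideanSpace ℝ (Fin dx) →L[ℝ] EuclideanSpace ℝ (Fin du))
    (hK : ‖K‖ ≤ κ)
    (hL : ∀ j : ℕ, ‖(A + B.comp K) ^ j‖ ≤ Real.sqrt dx * (1 - δ) ^ j)
    (w : ℤ → EuclideanSpace ℝ (Fin dx))
    (hw : ∀ s : ℤ, ‖w s‖ ≤ wb) (hw0 : ∀ s : ℤ, s ≤ 0 → w s = 0)
    (uL u : ℕ → EuclideanSpace ℝ (Fin du))
    (huL : ∀ t : ℕ, uL t = ∑ j ∈ Finset.range t,
      (K.comp ((A + B.comp K) ^ j)) (w ((t : ℤ) - j)))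
    (hu : ∀ t : ℕ, u t = ∑ j ∈ Finset.range p,
      (K.comp ((A + B.comp K) ^ j)) (w ((t : ℤ) - j))) :
    ∀ t : ℕ, ‖u t - uL t‖ ≤ Real.sqrt dx * κ * wb / δ * Real.exp (-δ * p) := by
  obtain ⟨hδ₀, hδ₁⟩ := hδ
  intro t
  set f : ℕ → EuclideanSpace ℝ (Fin du) := fun j => (K.comp ((A + B.comp K) ^ j)) (w (t - j))
  have hf_zero : ∀ j, t ≤ j → f j = 0 := fun j hj => by
    simp only [f, hw0 (t - j) (by omega), map_zero]
  have hf_le : ∀ j, ‖f j‖ ≤ Real.sqrt dx * κ * wb * (1 - δ) ^ j := fun j =>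
    calc ‖f j‖ ≤ ‖K‖ * ‖(A + B.comp K) ^ j‖ * ‖w (t - j)‖ :=
          ((K.comp _).le_opNorm _).trans
            (mul_le_mul_of_nonneg_right (K.opNorm_comp_le _) (norm_nonneg _))
      _ ≤ κ * (Real.sqrt dx * (1 - δ) ^ j) * wb := by
          have hκ : 0 ≤ κ := (norm_nonneg K).trans hK
          have hLj : 0 ≤ Real.sqrt dx * (1 - δ) ^ j := (norm_nonneg _).trans (hL j)
          gcongr
          exacts [hL j, hw _]
      _ = Real.sqrt dx * κ * wb * (1 - δ) ^ j := by ring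
  have hC : 0 ≤ Real.sqrt dx * κ * wb := by simpa using (norm_nonneg _).trans (hf_le 0)
  calc ‖u t - uL t‖ = ‖∑ j ∈ Ico p t, f j‖ := by
        rw [← norm_neg, neg_sub, hu, huL, sum_range_sub_sum_range_of_eq_zero hf_zero]
    _ ≤ Real.sqrt dx * κ * wb * (1 - δ) ^ p / (1 - (1 - δ)) :=
        norm_sum_Ico_le_of_norm_le_geometric (by linarith) (by linarith) hf_le p t
    _ ≤ Real.sqrt dx * κ * wb / δ * Real.exp (-δ * p) := by
        rw [sub_sub_cancel, mul_div_right_comm]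
        gcongr
        exact Real.one_sub_pow_le_exp_neg_mul hδ₁.le p
end

section
/- Let $\phi_1$ be a convex function on a convex set with minimizer $q_1$, and let $\phi_2 = \phi_1 + \psi$ where $\phi_2$ is $1$-strongly convex with respect to a norm $\|\cdot\|$ and has minimizer $q_2$, with $\psi$ convex and differentiable. Then $\|q_1 - q_2\| \le \|\nabla\psi(q_1)\|_*$, where $\|\cdot\|_*$ is the dual norm. -/
/-!
Strong convexity of `φ₂ = φ₁ + ψ` gives two quadratic lower bounds. At the minimizer `q₂` of `φ₂`:
`φ₂ q₁ ≥ φ₂ q₂ + ½‖q₁ - q₂‖²`. At `q₁`, where `φ₂ - ψ = φ₁` is minimal, `ψ'(q₁)` is a subgradient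
of `φ₂`: `φ₂ q₂ ≥ φ₂ q₁ + ψ'(q₁)(q₂ - q₁) + ½‖q₁ - q₂‖²`. Adding them,
`‖q₁ - q₂‖² ≤ ψ'(q₁)(q₁ - q₂) ≤ ‖ψ'(q₁)‖ ‖q₁ - q₂‖`.
-/

open Filter Topology Set

section

variable {E : Type*} [NormedAddCommGroup E] [NormedSpace ℝ E] {s : Set E} {m : ℝ} {f : E → ℝ}
  {x y : E}

lemma StrongConvexOn.apply_add_smul_sub_le (hf : StrongConvexOn s m f) (hx : x ∈ s) (hy : y ∈ s)
    {t : ℝ} (ht : t ∈ Icc (0 : ℝ) 1) :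
    f (x + t • (y - x)) ≤ f x + t * (f y - f x - (1 - t) * (m / 2 * ‖y - x‖ ^ 2)) := by
  have h := hf.2 hx hy (sub_nonneg.2 ht.2) ht.1 (sub_add_cancel 1 t)
  rw [show (1 - t) • x + t • y = x + t • (y - x) by module, norm_sub_rev] at h
  simp only [smul_eq_mul] at h
  linarith

/-- The difference quotients of `ψ` along the segment from `x` to `y` are bounded by those of `f`
(as `f - ψ` is minimal at `x`), hence by the strong-convexity chord bound; let `t → 0⁺`. -/
lemma StrongConvexOn.apply_add_le_of_hasFDerivAt {ψ : E → ℝ} {g : E →L[ℝ] ℝ}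
    (hf : StrongConvexOn s m f) (hψ : HasFDerivAt ψ g x) (hmin : IsMinOn (f - ψ) s x)
    (hx : x ∈ s) (hy : y ∈ s) : f x + g (y - x) + m / 2 * ‖y - x‖ ^ 2 ≤ f y := by
  set v := y - x
  have hline : HasDerivAt (fun t : ℝ ↦ ψ (x + t • v)) (g v) 0 := by
    have hψ' : HasFDerivAt ψ g (x + (0 : ℝ) • v) := by simpa using hψ
    exact hψ'.comp_hasDerivAt 0 (((hasDerivAt_id 0).smul_const v).const_add x |>.congr_deriv
      (one_smul ℝ v))
  have hslope : Tendsto (fun t : ℝ ↦ t⁻¹ * (ψ (x + t • v) - ψ x)) (𝓝[>] 0) (𝓝 (g v)) := by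
    simpa [slope_def_field, div_eq_inv_mul] using hline.tendsto_slope_zero_right
  have hbound : Tendsto (fun t : ℝ ↦ f y - f x - (1 - t) * (m / 2 * ‖v‖ ^ 2)) (𝓝[>] 0)
      (𝓝 (f y - f x - m / 2 * ‖v‖ ^ 2)) := by
    have hc : Continuous fun t : ℝ ↦ f y - f x - (1 - t) * (m / 2 * ‖v‖ ^ 2) := by fun_prop
    simpa using (hc.tendsto 0).mono_left nhdsWithin_le_nhds
  have hle := le_of_tendsto_of_tendsto hslope hbound <| by
    filter_upwards [Ioo_mem_nhdsGT (zero_lt_one' ℝ)] with t ht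
    have ht' : t ∈ Icc (0 : ℝ) 1 := Ioo_subset_Icc_self ht
    have hmin_t := hmin (hf.1.add_smul_sub_mem hx hy ht')
    have hchord := hf.apply_add_smul_sub_le hx hy ht'
    simp only [Pi.sub_apply, mem_ofPred_eq] at hmin_t
    rw [inv_mul_le_iff₀ ht.1]
    linarith
  linarith

lemma StrongConvexOn.apply_add_le_of_isMinOn (hf : StrongConvexOn s m f) (hmin : IsMinOn f s x)
    (hx : x ∈ s) (hy : y ∈ s) : f x + m / 2 * ‖y - x‖ ^ 2 ≤ f y := by
  simpa using hf.apply_add_le_of_hasFDerivAt (ψ := 0) (hasFDerivAt_const 0 x) (by rwa [sub_zero])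
    hx hy

end

theorem stmt_12_general {E : Type*} [NormedAddCommGroup E] [NormedSpace ℝ E]
    (φ₁ ψ : E → ℝ) (q₁ q₂ : E)
    (hψdiff : Differentiable ℝ ψ)
    (hsc : StrongConvexOn Set.univ 1 (fun x => φ₁ x + ψ x))
    (hq₁ : ∀ x, φ₁ q₁ ≤ φ₁ x)
    (hq₂ : ∀ x, φ₁ q₂ + ψ q₂ ≤ φ₁ x + ψ x) :
    ‖q₁ - q₂‖ ≤ ‖fderiv ℝ ψ q₁‖ := by
  set g := fderiv ℝ ψ q₁
  have hgrowth := hsc.apply_add_le_of_isMinOn (isMinOn_univ_iff.2 hq₂) (mem_univ q₂) (mem_univ q₁)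
  have hsubgrad := hsc.apply_add_le_of_hasFDerivAt (hψdiff q₁).hasFDerivAt
    (isMinOn_univ_iff.2 (by simpa using hq₁)) (mem_univ q₁) (mem_univ q₂)
  have hsq : ‖q₁ - q₂‖ ^ 2 ≤ ‖g‖ * ‖q₁ - q₂‖ := calc
    ‖q₁ - q₂‖ ^ 2 ≤ g (q₁ - q₂) := by
      rw [← neg_sub q₁ q₂, map_neg, norm_neg] at hsubgrad
      linarith
    _ ≤ ‖g‖ * ‖q₁ - q₂‖ := (le_abs_self _).trans (g.le_opNorm _)
  nlinarith [norm_nonneg g, norm_nonneg (q₁ - q₂)]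

/-- FTRL stability lemma (McMahan, Lemma 7): the minimizers of `φ₁` and `φ₂ = φ₁ + ψ`
are within the dual norm of `∇ψ(q₁)`. -/
theorem stmt_12 {E : Type*} [NormedAddCommGroup E] [NormedSpace ℝ E]
    (φ₁ ψ : E → ℝ) (q₁ q₂ : E)
    (hφ₁ : ConvexOn ℝ Set.univ φ₁)
    (hψconv : ConvexOn ℝ Set.univ ψ) (hψdiff : Differentiable ℝ ψ)
    (hsc : StrongConvexOn Set.univ 1 (fun x => φ₁ x + ψ x))
    (hq₁ : ∀ x, φ₁ q₁ ≤ φ₁ x)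
    (hq₂ : ∀ x, φ₁ q₂ + ψ q₂ ≤ φ₁ x + ψ x) :
    ‖q₁ - q₂‖ ≤ ‖fderiv ℝ ψ q₁‖ :=
  stmt_12_general φ₁ ψ q₁ q₂ hψdiff hsc hq₁ hq₂
end
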